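/- arXiv:2506.02947 — 2 statements merged into one kernel-verified Lean document; each statement's English description precedes it below -/
import Mathlib

section
/- Let p be an odd prime. All minors of the (p−1)/2 × (p−1)/2 matrix with (j,m)-entry (ω^j + ω^{−j})^m, where ω = exp(2πi/p) and j, m range over 1,...,(p−1)/2, are nonzero. -/
/-!
Work in `ℤ[ζ] = ℤ[X]/(Φ_p)`, which embeds into `ℂ`. Reduction modulo `ζ - 1` maps `ℤ[ζ]` onto
`𝔽_p` and sends every node `ζ^a + ζ^{-a}` to `2`. If a minor vanished, a kernel vector divided
by the largest power of `ζ - 1` dividing all its entries gives a polynomial `∑ d_l X^{m_l}` that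
vanishes at `k` distinct nodes, so its reduction is divisible by `(X - 2)^k`, while some reduced
coefficient is nonzero. Applying `(X d/dX)^s` for `s < k` and evaluating at `2` shows that the
reduced coefficients lie in the kernel of the Vandermonde matrix of the exponents `m_l`, which are
distinct modulo `p`: a contradiction.
-/

open Polynomial Matrix

namespace Polynomial

variable {R : Type*} [CommRing R]

theorem X_mul_derivative_sum_C_mul_X_pow {ι : Type*} (s : Finset ι) (b : ι → R) (m : ι → ℕ) :
    X * derivative (∑ l ∈ s, C (b l) * X ^ m l) = ∑ l ∈ s, C (b l * m l) * X ^ m l := by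
  rw [derivative_sum, Finset.mul_sum]
  refine Finset.sum_congr rfl fun l _ => ?_
  rw [derivative_C_mul_X_pow]
  rcases m l with _ | n
  · simp
  · rw [Nat.add_sub_cancel, mul_left_comm, ← pow_succ']

theorem X_sub_C_pow_sub_dvd_sum_C_mul_pow_mul_X_pow {ι : Type*} (s : Finset ι) {b : ι → R}
    {m : ι → ℕ} {c : R} {n : ℕ} (h : (X - C c) ^ n ∣ ∑ l ∈ s, C (b l) * X ^ m l) (e : ℕ) :
    (X - C c) ^ (n - e) ∣ ∑ l ∈ s, C (b l * m l ^ e) * X ^ m l := by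
  induction e with
  | zero => simpa using h
  | succ e ih =>
    have h' := dvd_mul_of_dvd_right (pow_sub_one_dvd_derivative_of_pow_dvd ih) X
    simpa only [X_mul_derivative_sum_C_mul_X_pow, mul_assoc, ← pow_succ, Nat.sub_sub] using h'

theorem eq_zero_of_X_sub_C_pow_dvd_sum_C_mul_X_pow [IsDomain R] {k : ℕ} {c : R} (hc : c ≠ 0)
    {m : Fin k → ℕ} (hm : Function.Injective fun l => (m l : R)) {b : Fin k → R}
    (h : (X - C c) ^ k ∣ ∑ l, C (b l) * X ^ m l) : b = 0 := by
  have hvec : (fun l => b l * c ^ m l) ᵥ* vandermonde (fun l => (m l : R)) = 0 := by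
    funext e
    have hroot : (∑ l, C (b l * m l ^ (e : ℕ)) * X ^ m l).IsRoot c := dvd_iff_isRoot.mp <|
      (dvd_pow_self _ (by omega)).trans (X_sub_C_pow_sub_dvd_sum_C_mul_pow_mul_X_pow _ h e)
    simpa [vecMul, dotProduct, eval_finsetSum, mul_right_comm] using hroot
  funext l
  simpa [hc] using congrFun (eq_zero_of_vecMul_eq_zero (det_vandermonde_ne_zero_iff.mpr hm) hvec) l

theorem prod_X_sub_C_dvd_of_eval_eq_zero [IsDomain R] {ι : Type*} [Fintype ι] {x : ι → R}
    (hx : Function.Injective x) {P : R[X]} (hP : ∀ i, P.eval (x i) = 0) :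
    ∏ i, (X - C (x i)) ∣ P := by
  rcases eq_or_ne P 0 with rfl | hP0
  · exact dvd_zero _
  have hle : Finset.univ.val.map x ≤ P.roots :=
    (Multiset.le_iff_subset (Finset.univ.nodup.map hx)).mpr fun a ha => by
      obtain ⟨i, -, rfl⟩ := Multiset.mem_map.mp ha
      exact (mem_roots hP0).mpr (hP i)
  have := (Multiset.prod_X_sub_C_dvd_iff_le_roots hP0 _).mpr hle
  rwa [Multiset.map_map] at this

end Polynomial

theorem exists_eq_pow_smul_not_dvd {R : Type*} [CommMonoidWithZero R] [IsCancelMulZero R]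
    [WfDvdMonoid R] {ι : Type*} {π : R} (hπ : ¬IsUnit π) {v : ι → R} (hv : v ≠ 0) :
    ∃ (N : ℕ) (d : ι → R), v = π ^ N • d ∧ ∃ l, ¬π ∣ d l := by
  classical
  obtain ⟨l₁, hl₁⟩ := Function.ne_iff.mp hv
  have hex : ∃ N, ∃ l, ¬π ^ (N + 1) ∣ v l :=
    (FiniteMultiplicity.of_not_isUnit hπ hl₁).imp fun _ hN => ⟨l₁, hN⟩
  have hdvd : ∀ l, π ^ Nat.find hex ∣ v l := by
    intro l
    rcases hN : Nat.find hex with _ | N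
    · simp
    · by_contra h
      exact Nat.find_min hex (hN ▸ N.lt_succ_self) ⟨l, h⟩
  choose d hd using hdvd
  obtain ⟨l, hl⟩ := Nat.find_spec hex
  refine ⟨Nat.find hex, d, funext hd, l, fun h => hl ?_⟩
  rw [hd l, pow_succ]
  exact mul_dvd_mul_left _ h

namespace Matrix

theorem exists_mulVec_eq_zero_not_dvd {R : Type*} [CommRing R] [IsDomain R] [WfDvdMonoid R]
    {n : Type*} [Fintype n] [DecidableEq n] {M : Matrix n n R} (hM : M.det = 0) {π : R}
    (hπ0 : π ≠ 0) (hπ : ¬IsUnit π) : ∃ d, M *ᵥ d = 0 ∧ ∃ l, ¬π ∣ d l := by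
  obtain ⟨v, hv0, hv⟩ := exists_mulVec_eq_zero_iff.mpr hM
  obtain ⟨N, d, rfl, l, hl⟩ := exists_eq_pow_smul_not_dvd hπ hv0
  rw [mulVec_smul] at hv
  exact ⟨d, (smul_eq_zero.mp hv).resolve_left (pow_ne_zero _ hπ0), l, hl⟩

def genVandermonde {R : Type*} [CommRing R] {k : ℕ} (x : Fin k → R) (m : Fin k → ℕ) :
    Matrix (Fin k) (Fin k) R :=
  of fun i j => x i ^ m j

theorem _root_.RingHom.det_genVandermonde_comp {R S : Type*} [CommRing R] [CommRing S]
    (f : R →+* S) {k : ℕ} (x : Fin k → R) (m : Fin k → ℕ) :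
    (genVandermonde (f ∘ x) m).det = f (genVandermonde x m).det := by
  rw [f.map_det]
  congr 1
  ext i j
  simp [genVandermonde]

theorem det_genVandermonde_ne_zero_of_ker_eq_span {R F : Type*} [CommRing R] [IsDomain R]
    [WfDvdMonoid R] [CommRing F] [IsDomain F] {ψ : R →+* F} {π : R} (hπ : π ≠ 0)
    (hker : RingHom.ker ψ = Ideal.span {π}) {k : ℕ} {x : Fin k → R} (hx : Function.Injective x)
    {c : F} (hc : c ≠ 0) (hred : ∀ i, ψ (x i) = c) {m : Fin k → ℕ}
    (hm : Function.Injective fun l => (m l : F)) : (genVandermonde x m).det ≠ 0 := by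
  intro hdet
  have hπu : ¬IsUnit π := fun hu =>
    RingHom.ker_ne_top ψ (by rw [hker, Ideal.span_singleton_eq_top.mpr hu])
  obtain ⟨d, hd, l, hl⟩ := exists_mulVec_eq_zero_not_dvd hdet hπ hπu
  have hP : ∏ i, (X - C (x i)) ∣ ∑ j, C (d j) * X ^ m j :=
    prod_X_sub_C_dvd_of_eval_eq_zero hx fun i => by
      simpa [eval_finsetSum, mulVec, dotProduct, genVandermonde, mul_comm (d _)] using
        congrFun hd i
  have hψP : (X - C c) ^ k ∣ ∑ j, C (ψ (d j)) * X ^ m j := by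
    simpa [Polynomial.map_prod, Polynomial.map_sum, hred] using Polynomial.map_dvd ψ hP
  have hψd := congrFun (eq_zero_of_X_sub_C_pow_dvd_sum_C_mul_X_pow hc hm hψP) l
  exact hl (Ideal.mem_span_singleton.mp (hker ▸ RingHom.mem_ker.mpr hψd))

end Matrix

theorem AdjoinRoot.root_sub_one_dvd_mk_sub_eval_one {R : Type*} [CommRing R] (f g : R[X]) :
    root f - 1 ∣ mk f g - g.eval 1 := by
  simpa using map_dvd (mk f) (X_sub_C_dvd_sub_C_eval (a := 1) (p := g))

section CyclotomicReduction

variable (p : ℕ) [Fact p.Prime]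

noncomputable def cyclotomicReduction : AdjoinRoot (cyclotomic p ℤ) →+* ZMod p :=
  AdjoinRoot.lift (Int.castRingHom _) 1 (by simp [eval₂_at_one, eval_one_cyclotomic_prime])

theorem cyclotomicReduction_mk (g : ℤ[X]) :
    cyclotomicReduction p (AdjoinRoot.mk _ g) = ((g.eval 1 : ℤ) : ZMod p) := by
  simp [cyclotomicReduction, AdjoinRoot.lift_mk, eval₂_at_one]

theorem cyclotomicReduction_root : cyclotomicReduction p (AdjoinRoot.root _) = 1 :=
  AdjoinRoot.lift_root _

theorem ker_cyclotomicReduction :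
    RingHom.ker (cyclotomicReduction p) = Ideal.span {AdjoinRoot.root (cyclotomic p ℤ) - 1} := by
  refine le_antisymm (fun z hz => ?_) ((Ideal.span_singleton_le_iff_mem _).mpr ?_)
  · induction z using AdjoinRoot.induction_on with
    | ih g =>
    rw [RingHom.mem_ker, cyclotomicReduction_mk, ZMod.intCast_zmod_eq_zero_iff_dvd] at hz
    obtain ⟨t, ht⟩ := hz
    have hp : AdjoinRoot.root (cyclotomic p ℤ) - 1 ∣ (p : AdjoinRoot (cyclotomic p ℤ)) := by
      simpa [AdjoinRoot.mk_self, eval_one_cyclotomic_prime] using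
        AdjoinRoot.root_sub_one_dvd_mk_sub_eval_one (cyclotomic p ℤ) (cyclotomic p ℤ)
    have := dvd_add (AdjoinRoot.root_sub_one_dvd_mk_sub_eval_one _ g) (dvd_mul_of_dvd_left hp t)
    simpa [ht, Ideal.mem_span_singleton] using this
  · simp [cyclotomicReduction_root]

end CyclotomicReduction

namespace IsPrimitiveRoot

variable {K : Type*} [Field K] {ζ : K} {n : ℕ}

theorem injOn_pow_add_inv_pow (hζ : IsPrimitiveRoot ζ n) :
    Set.InjOn (fun a : ℕ => ζ ^ a + ζ⁻¹ ^ a) {a | 2 * a < n} := by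
  intro a ha b hb hab
  simp only [Set.mem_ofPred_eq, inv_pow] at ha hb hab
  have hx := mul_inv_cancel₀ (pow_ne_zero a (hζ.ne_zero (by omega)))
  have hy := mul_inv_cancel₀ (pow_ne_zero b (hζ.ne_zero (by omega)))
  have hprod : (ζ ^ a - ζ ^ b) * (ζ ^ (a + b) - 1) = 0 := by
    rw [pow_add]
    linear_combination (ζ ^ a * ζ ^ b) * hab - ζ ^ b * hx + ζ ^ a * hy
  rcases mul_eq_zero.mp hprod with h | h
  · exact hζ.pow_inj (by omega) (by omega) (sub_eq_zero.mp h)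
  · have := Nat.eq_zero_of_dvd_of_lt ((hζ.pow_eq_one_iff_dvd _).mp (sub_eq_zero.mp h)) (by omega)
    omega

theorem injective_adjoinRoot_lift [CharZero K] (hζ : IsPrimitiveRoot ζ n) (hn : 0 < n)
    (h : (cyclotomic n ℤ).eval₂ (Int.castRingHom K) ζ = 0) :
    Function.Injective (AdjoinRoot.lift (Int.castRingHom K) ζ h) := by
  refine (injective_iff_map_eq_zero _).mpr fun z hz => ?_
  induction z using AdjoinRoot.induction_on with
  | ih g =>
  rw [AdjoinRoot.lift_mk] at hz
  rw [AdjoinRoot.mk_eq_zero, cyclotomic_eq_minpoly hζ hn]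
  exact minpoly.isIntegrallyClosed_dvd (hζ.isIntegral hn) (by rwa [aeval_def, algebraMap_int_eq])

theorem det_genVandermonde_pow_add_inv_pow_ne_zero [CharZero K] {p : ℕ} (hp : p.Prime)
    (hp2 : p ≠ 2) (hζ : IsPrimitiveRoot ζ p) {k : ℕ} {a m : Fin k → ℕ}
    (ha : Function.Injective a) (ha_lt : ∀ i, 2 * a i < p) (hm : Function.Injective m)
    (hm_lt : ∀ j, m j < p) : (genVandermonde (fun i => ζ ^ a i + ζ⁻¹ ^ a i) m).det ≠ 0 := by
  have := Fact.mk hp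
  have : IsDomain (AdjoinRoot (cyclotomic p ℤ)) :=
    AdjoinRoot.isDomain_of_prime (cyclotomic.irreducible hp.pos).prime
  have hΦ : (cyclotomic p ℤ).eval₂ (Int.castRingHom K) ζ = 0 := by
    simpa [eval₂_eq_eval_map, map_cyclotomic_int] using hζ.isRoot_cyclotomic hp.pos
  set ι := AdjoinRoot.lift (Int.castRingHom K) ζ hΦ
  set θ := AdjoinRoot.root (cyclotomic p ℤ)
  let x : Fin k → AdjoinRoot (cyclotomic p ℤ) := fun i => θ ^ a i + θ ^ ((p - 1) * a i)
  have hinv : ζ ^ (p - 1) = ζ⁻¹ := eq_inv_of_mul_eq_one_left <| by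
    rw [← pow_succ, Nat.sub_add_cancel hp.one_le, hζ.pow_eq_one]
  have hιx : ι ∘ x = fun i => ζ ^ a i + ζ⁻¹ ^ a i := funext fun i => by
    simp [ι, x, θ, AdjoinRoot.lift_root, pow_mul, hinv]
  have hx : Function.Injective x := Function.Injective.of_comp <| by
    rw [hιx]
    exact fun i j hij => ha (hζ.injOn_pow_add_inv_pow (ha_lt i) (ha_lt j) hij)
  have hθ : θ - 1 ≠ 0 := fun h =>
    hζ.ne_one hp.one_lt (sub_eq_zero.mp (by simpa [ι, θ, AdjoinRoot.lift_root] using congrArg ι h))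
  have hred : ∀ i, cyclotomicReduction p (x i) = 2 := fun i => by
    simp [x, θ, cyclotomicReduction_root, one_add_one_eq_two]
  have hm' : Function.Injective fun j => (m j : ZMod p) := fun i j hij => hm <| by
    simpa [ZMod.val_cast_of_lt (hm_lt _)] using congrArg ZMod.val hij
  have h2 : (2 : ZMod p) ≠ 0 := Ring.two_ne_zero (by rwa [ZMod.ringChar_zmod_n])
  rw [← hιx, RingHom.det_genVandermonde_comp]
  exact (map_ne_zero_iff ι (hζ.injective_adjoinRoot_lift hp.pos hΦ)).mpr <|
    det_genVandermonde_ne_zero_of_ker_eq_span hθ (ker_cyclotomicReduction p) hx h2 hred hm'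

end IsPrimitiveRoot

/-- Real version of Chebotarëv's theorem: all minors of the
`(p-1)/2 × (p-1)/2` Vandermonde matrix with entries `(ω^j + ω^{-j})^m`,
`j, m = 1, ..., (p-1)/2`, are nonzero. -/
theorem real_chebotarev_minors_nonzero
    (p : ℕ) (hp : p.Prime) (hodd : Odd p)
    (ω : ℂ) (hω : ω = Complex.exp (2 * Real.pi * Complex.I / p))
    (k : ℕ) (r c : Fin k → Fin ((p - 1) / 2))
    (hr : Function.Injective r) (hc : Function.Injective c) :
    Matrix.det (fun i j : Fin k =>
        (ω ^ ((r i : ℕ) + 1) + ω⁻¹ ^ ((r i : ℕ) + 1)) ^ ((c j : ℕ) + 1)) ≠ 0 := by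
  have hζ : IsPrimitiveRoot ω p := hω ▸ Complex.isPrimitiveRoot_exp p hp.ne_zero
  have hp2 : p ≠ 2 := by
    rintro rfl
    exact absurd hodd (by decide)
  have hlt : ∀ i : Fin ((p - 1) / 2), 2 * ((i : ℕ) + 1) < p := fun i => by omega
  exact hζ.det_genVandermonde_pow_add_inv_pow_ne_zero (a := fun i => r i + 1)
    (m := fun j => c j + 1) hp hp2 (fun i j h => hr (Fin.ext (Nat.succ_injective h)))
    (fun i => hlt (r i)) (fun i j h => hc (Fin.ext (Nat.succ_injective h)))
    (fun j => by have := hlt (c j); omega)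
end

section
/- Let p be prime, A, B ⊆ {0,...,p−1} with |A| = |B| = k, and write s_A = Σ_μ c_μ x^μ as Schur polynomial. Let α_{B'} denote the substitution x_i ↦ X^{b'_i} for the ascending list of B'. Then in ℤ[X]/Φ_p(X): Σ_{l=1}^{p−1} α_{l·B}(s_A) = m_{A,B}·p − ∏_{i<j}(a_j − a_i)/∏_{i<j}(j − i), where m_{A,B} = Σ_μ c_μ·1(p | Σ_j μ_j b_j). -/
/-!
Substituting `x_j ↦ X^j` into the defining identity `det (x_j ^ a_i) = V(x) · s_A` turns both
determinants into products of factors `X^d - X^c = (X - 1)(X^c + ⋯ + X^(d-1))`; cancelling the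
common power of `X - 1` and putting `X = 1` gives `s_A(1, …, 1) = ∏ (a_j - a_i) / ∏ (j - i)`.

Divisibility by `Φ_p` is tested by evaluating at a primitive `p`-th root of unity `ζ ∈ ℂ`, since
`Φ_p` is the minimal polynomial of `ζ` over `ℤ`. There the `l`-th substitution sends the monomial
`x^μ` to `(ζ^l)^⟨μ, B⟩`, and summing over `l = 1, …, p-1` gives `p - 1` or `-1` according as `p`
divides `⟨μ, B⟩` or not. Summing over `μ` yields `p · m_{A,B} - s_A(1, …, 1)`.
-/

open Finset MvPolynomial Polynomial

theorem Finset.prod_filter_fst_lt_snd {β : Type*} [CommMonoid β] {k : ℕ}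
    (f : Fin k → Fin k → β) :
    ∏ q ∈ univ.filter (fun q : Fin k × Fin k => q.1 < q.2), f q.1 q.2
      = ∏ i, ∏ j ∈ Ioi i, f i j := by
  rw [prod_filter, ← univ_product_univ, prod_product]
  refine prod_congr rfl fun i _ => ?_
  rw [← prod_filter]
  congr 1
  ext j
  simp

namespace Polynomial

variable {R ι : Type*} [CommRing R]

theorem prod_X_pow_sub_X_pow (P : Finset ι) (u v : ι → ℕ) (h : ∀ q ∈ P, u q ≤ v q) :
    ∏ q ∈ P, (X ^ v q - X ^ u q : R[X])
      = (∏ q ∈ P, ∑ t ∈ Ico (u q) (v q), X ^ t) * (X - 1) ^ #P := by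
  rw [← prod_const, ← prod_mul_distrib]
  exact prod_congr rfl fun q hq => (geom_sum_Ico_mul _ (h q hq)).symm

theorem eval_one_prod_geom_sum_Ico (P : Finset ι) (u v : ι → ℕ) (h : ∀ q ∈ P, u q ≤ v q) :
    (∏ q ∈ P, ∑ t ∈ Ico (u q) (v q), X ^ t : R[X]).eval 1 = ∏ q ∈ P, ((v q : R) - u q) := by
  simp only [eval_prod, eval_finsetSum, eval_pow, eval_X, one_pow, sum_const, Nat.card_Ico,
    nsmul_one]
  exact prod_congr rfl fun q hq => Nat.cast_sub (h q hq)

end Polynomial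

namespace MvPolynomial

variable {R : Type*} [CommRing R] {k : ℕ}

theorem aeval_det_X_pow (a : Fin k → ℕ) :
    aeval (fun j : Fin k => (Polynomial.X : R[X]) ^ (j : ℕ))
        (Matrix.det (Matrix.of fun i j : Fin k => (X j : MvPolynomial (Fin k) R) ^ a i))
      = ∏ q ∈ univ.filter (fun q : Fin k × Fin k => q.1 < q.2),
          (Polynomial.X ^ a q.2 - Polynomial.X ^ a q.1) := by
  rw [← AlgHom.coe_toRingHom, RingHom.map_det,
    prod_filter_fst_lt_snd fun i j => (Polynomial.X : R[X]) ^ a j - Polynomial.X ^ a i,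
    ← Matrix.det_vandermonde]
  congr 1
  ext i j
  simp [Matrix.vandermonde, ← pow_mul, mul_comm]

theorem mul_eval_one_eq_of_det_eq (a : Fin k → ℕ) (ha : Monotone a) (s : MvPolynomial (Fin k) R)
    (hs : Matrix.det (Matrix.of fun i j : Fin k => (X j : MvPolynomial (Fin k) R) ^ a i)
        = (∏ q ∈ univ.filter (fun q : Fin k × Fin k => q.1 < q.2), (X q.2 - X q.1)) * s) :
    (∏ q ∈ univ.filter (fun q : Fin k × Fin k => q.1 < q.2), (((q.2 : ℕ) : R) - (q.1 : ℕ)))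
        * eval (fun _ => 1) s
      = ∏ q ∈ univ.filter (fun q : Fin k × Fin k => q.1 < q.2), ((a q.2 : R) - a q.1) := by
  set P := univ.filter (fun q : Fin k × Fin k => q.1 < q.2)
  have hle : ∀ q ∈ P, (q.1 : ℕ) ≤ q.2 := fun q hq => (mem_filter.1 hq).2.le
  have hale : ∀ q ∈ P, a q.1 ≤ a q.2 := fun q hq => ha (mem_filter.1 hq).2.le
  set ψ : MvPolynomial (Fin k) R →ₐ[R] R[X] := aeval fun j => Polynomial.X ^ (j : ℕ)
  have h := congrArg ψ hs
  rw [aeval_det_X_pow, map_mul, map_prod] at h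
  simp only [map_sub, ψ, aeval_X] at h
  rw [prod_X_pow_sub_X_pow P _ _ hale, prod_X_pow_sub_X_pow P _ _ hle, mul_right_comm] at h
  have h1 := congrArg (Polynomial.eval 1) (((monic_X_sub_C 1).pow _).isRegular.right h)
  have hψ : (ψ s).eval 1 = eval (fun _ => 1) s := by
    rw [← Polynomial.coe_aeval_eq_eval, comp_aeval_apply, ← MvPolynomial.coe_aeval_eq_eval]
    simp
  rwa [Polynomial.eval_mul, eval_one_prod_geom_sum_Ico P _ _ hle,
    eval_one_prod_geom_sum_Ico P _ _ hale, hψ, eq_comm] at h1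

end MvPolynomial

theorem MvPolynomial.aeval_pow_eq_sum {R A σ : Type*} [CommSemiring R] [CommSemiring A]
    [Algebra R A] [Fintype σ] (y : A) (b : σ → ℕ) (s : MvPolynomial σ R) :
    aeval (fun j => y ^ b j) s
      = ∑ μ ∈ s.support, algebraMap R A (s.coeff μ) * y ^ (∑ j, μ j * b j) := by
  simp only [aeval_def, eval₂_eq', ← pow_mul, prod_pow_eq_pow_sum, mul_comm (b _)]

namespace IsPrimitiveRoot

theorem pow_mod {M : Type*} [CommMonoid M] {ζ : M} {n : ℕ} (hζ : IsPrimitiveRoot ζ n) (m : ℕ) :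
    ζ ^ (m % n) = ζ ^ m := by
  rw [hζ.eq_orderOf, pow_mod_orderOf]

variable {R : Type*} [CommRing R] [IsDomain R] {ζ : R} {n : ℕ}

theorem sum_range_pow_pow (hζ : IsPrimitiveRoot ζ n) (S : ℕ) :
    ∑ l ∈ range n, (ζ ^ l) ^ S = if n ∣ S then (n : R) else 0 := by
  simp_rw [← pow_mul, mul_comm _ S, pow_mul]
  split_ifs with h
  · simp [(hζ.pow_eq_one_iff_dvd S).2 h]
  · have hS : ζ ^ S - 1 ≠ 0 := sub_ne_zero.2 fun h' => h ((hζ.pow_eq_one_iff_dvd S).1 h')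
    refine (mul_eq_zero.1 ?_).resolve_right hS
    rw [geom_sum_mul, ← pow_mul, mul_comm, pow_mul, hζ.pow_eq_one, one_pow, sub_self]

theorem sum_Icc_pow_pow (hζ : IsPrimitiveRoot ζ n) (hn : 0 < n) (S : ℕ) :
    ∑ l ∈ Icc 1 (n - 1), (ζ ^ l) ^ S = (if n ∣ S then (n : R) else 0) - 1 := by
  rw [← hζ.sum_range_pow_pow, sum_range_eq_add_Ico _ hn,
    Icc_sub_one_right_eq_Ico_of_not_isMin (by simpa using hn.ne')]
  simp

end IsPrimitiveRoot

theorem Polynomial.cyclotomic_dvd_of_aeval_eq_zero {K : Type*} [Field K] [CharZero K] {ζ : K}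
    {n : ℕ} (hζ : IsPrimitiveRoot ζ n) (hn : 0 < n) {f : ℤ[X]} (hf : aeval ζ f = 0) :
    cyclotomic n ℤ ∣ f := by
  rw [cyclotomic_eq_minpoly hζ hn]
  exact minpoly.isIntegrallyClosed_dvd (hζ.isIntegral hn) hf

theorem sum_conjugated_schur_substitutions_general
    (p : ℕ) (hp : p.Prime)
    (k : ℕ) (a b : Fin k → ℕ)
    (ha : StrictMono a)
    (s : MvPolynomial (Fin k) ℤ)
    (hs : Matrix.det (fun i j : Fin k => (MvPolynomial.X j : MvPolynomial (Fin k) ℤ) ^ a i)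
        = (∏ q ∈ Finset.univ.filter (fun q : Fin k × Fin k => q.1 < q.2),
            (MvPolynomial.X q.2 - MvPolynomial.X q.1)) * s)
    (m : ℤ)
    (hm : m = ∑ μ ∈ s.support,
        s.coeff μ * (if (p : ℤ) ∣ (∑ j : Fin k, (μ j : ℤ) * (b j : ℤ)) then 1 else 0))
    (N : ℤ)
    (hN : N * (∏ q ∈ Finset.univ.filter (fun q : Fin k × Fin k => q.1 < q.2),
            ((q.2 : ℤ) - (q.1 : ℤ)))
        = ∏ q ∈ Finset.univ.filter (fun q : Fin k × Fin k => q.1 < q.2),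
            ((a q.2 : ℤ) - (a q.1 : ℤ))) :
    (∑ i ∈ Finset.range p, (Polynomial.X : Polynomial ℤ) ^ i)
      ∣ ((∑ l ∈ Finset.Icc 1 (p - 1),
            MvPolynomial.aeval
              (fun j : Fin k => (Polynomial.X : Polynomial ℤ) ^ ((l * b j) % p)) s)
          - Polynomial.C (m * p - N)) := by
  have hs_one : eval (fun _ => 1) s = N := by
    refine mul_left_cancel₀ (prod_ne_zero_iff.2 fun q hq => ?_)
      ((mul_eval_one_eq_of_det_eq a ha.monotone s hs).trans (hN.symm.trans (mul_comm _ _)))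
    exact sub_ne_zero.2 (by exact_mod_cast Fin.val_injective.ne (mem_filter.1 hq).2.ne')
  have hsum_coeff : ∑ μ ∈ s.support, s.coeff μ * ((if p ∣ ∑ j, μ j * b j then (p : ℤ) else 0) - 1)
      = m * p - N := by
    rw [hm, ← hs_one, eval_eq', sum_mul, ← sum_sub_distrib]
    refine sum_congr rfl fun μ _ => ?_
    simp only [one_pow, prod_const_one, mul_one, ← Nat.cast_mul, ← Nat.cast_sum,
      Int.natCast_dvd_natCast]
    split_ifs <;> ring
  have := Fact.mk hp
  obtain ⟨ζ, hζ⟩ : ∃ ζ : ℂ, IsPrimitiveRoot ζ p := ⟨_, Complex.isPrimitiveRoot_exp p hp.ne_zero⟩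
  rw [← cyclotomic_prime ℤ p]
  refine cyclotomic_dvd_of_aeval_eq_zero hζ hp.pos ?_
  simp only [map_sub, map_sum, Polynomial.aeval_C, comp_aeval_apply]
  simp only [map_pow, Polynomial.aeval_X, hζ.pow_mod, pow_mul, aeval_pow_eq_sum]
  rw [sum_comm]
  simp only [← mul_sum, hζ.sum_Icc_pow_pow hp.pos]
  rw [sub_eq_zero, ← map_sub, ← hsum_coeff]
  simp

/-- In `ℤ[X]/Φ_p(X)`:
`Σ_{l=1}^{p-1} α_{l·B}(s_A) = m_{A,B}·p − ∏_{i<j}(a_j−a_i)/∏_{i<j}(j−i)`,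
stated as a divisibility by `Φ_p` in `ℤ[X]`. -/
theorem sum_conjugated_schur_substitutions
    (p : ℕ) (hp : p.Prime)
    (k : ℕ) (a b : Fin k → ℕ)
    (ha : StrictMono a) (hb : StrictMono b)
    (hap : ∀ i, a i < p) (hbp : ∀ i, b i < p)
    (s : MvPolynomial (Fin k) ℤ)
    (hs : Matrix.det (fun i j : Fin k => (MvPolynomial.X j : MvPolynomial (Fin k) ℤ) ^ a i)
        = (∏ q ∈ Finset.univ.filter (fun q : Fin k × Fin k => q.1 < q.2),
            (MvPolynomial.X q.2 - MvPolynomial.X q.1)) * s)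
    (m : ℤ)
    (hm : m = ∑ μ ∈ s.support,
        s.coeff μ * (if (p : ℤ) ∣ (∑ j : Fin k, (μ j : ℤ) * (b j : ℤ)) then 1 else 0))
    (N : ℤ)
    (hN : N * (∏ q ∈ Finset.univ.filter (fun q : Fin k × Fin k => q.1 < q.2),
            ((q.2 : ℤ) - (q.1 : ℤ)))
        = ∏ q ∈ Finset.univ.filter (fun q : Fin k × Fin k => q.1 < q.2),
            ((a q.2 : ℤ) - (a q.1 : ℤ))) :
    (∑ i ∈ Finset.range p, (Polynomial.X : Polynomial ℤ) ^ i)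
      ∣ ((∑ l ∈ Finset.Icc 1 (p - 1),
            MvPolynomial.aeval
              (fun j : Fin k => (Polynomial.X : Polynomial ℤ) ^ ((l * b j) % p)) s)
          - Polynomial.C (m * p - N)) :=
  sum_conjugated_schur_substitutions_general p hp k a b ha s hs m hm N hN
end
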